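/- arXiv:1704.05902 — 3 statements merged into one kernel-verified Lean document; each statement's English description precedes it below -/
import Mathlib

section
/- For all real $x, y > 0$, the beta function satisfies $B(x, y) \ge \frac{x^{x-1} y^{y-1}}{(x+y)^{x+y-1}}$. -/
/-!
Write `s = x + y`. Shifting both arguments by one gives
`B(x, y) = s (s + 1) / (x y) · ∫₀¹ tˣ (1 - t)ʸ dt`, and now the integrand is continuous.
For any `a ∈ [0, 1]`, bounding `(1 - t)ʸ ≥ (1 - a)ʸ` on `[0, a]` and `tˣ ≥ aˣ` on `[a, 1]` gives
`∫₀¹ tˣ (1 - t)ʸ dt ≥ aˣ (1 - a)ʸ / (s + 1)`. Taking `a = x / s`, where the integrand is maximal,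
yields `aˣ (1 - a)ʸ = xˣ yʸ / sˢ`, which is the bound.
-/

/-- The Euler beta function `B(x,y) = Γ(x)Γ(y)/Γ(x+y)`. -/
noncomputable def betaFn (x y : ℝ) : ℝ :=
  Real.Gamma x * Real.Gamma y / Real.Gamma (x + y)

open Real intervalIntegral

theorem betaFn_eq_integral {x y : ℝ} (hx : 0 < x) (hy : 0 < y) :
    betaFn x y = ∫ t in (0 : ℝ)..1, t ^ (x - 1) * (1 - t) ^ (y - 1) := by
  have hreal : Complex.betaIntegral x y
      = ((∫ t in (0 : ℝ)..1, t ^ (x - 1) * (1 - t) ^ (y - 1) : ℝ) : ℂ) := by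
    rw [Complex.betaIntegral, ← intervalIntegral.integral_ofReal]
    refine integral_congr fun t ht => ?_
    rw [Set.uIcc_of_le zero_le_one] at ht
    push_cast [Complex.ofReal_cpow ht.1, Complex.ofReal_cpow (sub_nonneg.2 ht.2)]
    rfl
  rw [show betaFn x y = ProbabilityTheory.beta x y from rfl,
    ProbabilityTheory.beta_eq_betaIntegralReal x y hx hy, hreal, Complex.ofReal_re]

theorem betaFn_eq_mul_betaFn_add_one {x y : ℝ} (hx : 0 < x) (hy : 0 < y) :
    betaFn x y = (x + y) * (x + y + 1) / (x * y) * betaFn (x + 1) (y + 1) := by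
  have hs : 0 < x + y := add_pos hx hy
  have hΓ : Gamma (x + y) ≠ 0 := (Gamma_pos_of_pos hs).ne'
  rw [betaFn, betaFn, Gamma_add_one hx.ne', Gamma_add_one hy.ne',
    show x + 1 + (y + 1) = x + y + 1 + 1 by ring, Gamma_add_one (by positivity),
    Gamma_add_one hs.ne']
  field_simp

theorem continuous_rpow_mul_one_sub_rpow {x y : ℝ} (hx : 0 ≤ x) (hy : 0 ≤ y) :
    Continuous fun t : ℝ => t ^ x * (1 - t) ^ y :=
  (continuous_id.rpow_const fun _ => Or.inr hx).mul
    ((continuous_const.sub continuous_id).rpow_const fun _ => Or.inr hy)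

theorem rpow_add_one_div_mul_one_sub_rpow_le_integral {x y a : ℝ} (hx : 0 ≤ x) (hy : 0 ≤ y)
    (ha₀ : 0 ≤ a) (ha₁ : a ≤ 1) :
    a ^ (x + 1) / (x + 1) * (1 - a) ^ y ≤ ∫ t in (0 : ℝ)..a, t ^ x * (1 - t) ^ y := by
  have hpow : Continuous fun t : ℝ => t ^ x := continuous_id.rpow_const fun _ => Or.inr hx
  calc a ^ (x + 1) / (x + 1) * (1 - a) ^ y
      = ∫ t in (0 : ℝ)..a, t ^ x * (1 - a) ^ y := by
        rw [integral_mul_const, integral_rpow (Or.inl (by linarith)),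
          zero_rpow (by linarith), sub_zero]
    _ ≤ ∫ t in (0 : ℝ)..a, t ^ x * (1 - t) ^ y :=
        integral_mono_on ha₀ ((hpow.mul continuous_const).intervalIntegrable _ _)
          ((continuous_rpow_mul_one_sub_rpow hx hy).intervalIntegrable _ _) fun t ht =>
            mul_le_mul_of_nonneg_left (rpow_le_rpow (by linarith) (by linarith [ht.2]) hy)
              (rpow_nonneg ht.1 x)

theorem rpow_mul_one_sub_rpow_div_le_integral {x y a : ℝ} (hx : 0 ≤ x) (hy : 0 ≤ y)
    (ha₀ : 0 ≤ a) (ha₁ : a ≤ 1) :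
    a ^ x * (1 - a) ^ y / (x + y + 1) ≤ ∫ t in (0 : ℝ)..1, t ^ x * (1 - t) ^ y := by
  have hf := continuous_rpow_mul_one_sub_rpow hx hy
  have hleft := rpow_add_one_div_mul_one_sub_rpow_le_integral hx hy ha₀ ha₁
  have hright : (1 - a) ^ (y + 1) / (y + 1) * a ^ x
      ≤ ∫ t in a..1, t ^ x * (1 - t) ^ y := by
    have hsymm :=
      rpow_add_one_div_mul_one_sub_rpow_le_integral hy hx (sub_nonneg.2 ha₁) (by linarith)
    rw [sub_sub_cancel] at hsymm
    have hreflect :=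
      integral_comp_sub_left (fun u : ℝ => u ^ y * (1 - u) ^ x) (a := a) (b := 1) 1
    simp only [sub_sub_cancel, sub_self] at hreflect
    rwa [hreflect.symm.trans (integral_congr fun t _ => mul_comm _ _)] at hsymm
  have hxa : a ^ (x + 1) = a ^ x * a := rpow_add_one' ha₀ (by linarith)
  have hya : (1 - a) ^ (y + 1) = (1 - a) ^ y * (1 - a) := rpow_add_one' (by linarith) (by linarith)
  rw [← integral_add_adjacent_intervals (hf.intervalIntegrable 0 a) (hf.intervalIntegrable a 1)]
  calc a ^ x * (1 - a) ^ y / (x + y + 1)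
      = a ^ x * (1 - a) ^ y * (a / (x + y + 1) + (1 - a) / (x + y + 1)) := by
        field_simp; ring
    _ ≤ a ^ x * (1 - a) ^ y * (a / (x + 1) + (1 - a) / (y + 1)) := by
        gcongr <;> linarith
    _ = a ^ (x + 1) / (x + 1) * (1 - a) ^ y + (1 - a) ^ (y + 1) / (y + 1) * a ^ x := by
        rw [hxa, hya]; ring
    _ ≤ _ := add_le_add hleft hright

/-- Grenié–Molteni: for all `x, y > 0`,
`B(x,y) ≥ x^{x-1} y^{y-1} / (x+y)^{x+y-1}`. -/
theorem betaFn_ge (x y : ℝ) (hx : 0 < x) (hy : 0 < y) :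
    betaFn x y ≥ x ^ (x - 1) * y ^ (y - 1) / (x + y) ^ (x + y - 1) := by
  have hs : 0 < x + y := add_pos hx hy
  have hB : betaFn (x + 1) (y + 1) = ∫ t in (0 : ℝ)..1, t ^ x * (1 - t) ^ y := by
    simpa only [add_sub_cancel_right] using betaFn_eq_integral (x := x + 1) (y := y + 1)
      (by linarith) (by linarith)
  have hmode : 1 - x / (x + y) = y / (x + y) := by field_simp; ring
  have hM := rpow_mul_one_sub_rpow_div_le_integral hx.le hy.le
    (div_nonneg hx.le hs.le) ((div_le_one hs).2 (by linarith))
  rw [hmode] at hM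
  rw [ge_iff_le, betaFn_eq_mul_betaFn_add_one hx hy, hB]
  calc x ^ (x - 1) * y ^ (y - 1) / (x + y) ^ (x + y - 1)
      = (x + y) * (x + y + 1) / (x * y)
          * ((x / (x + y)) ^ x * (y / (x + y)) ^ y / (x + y + 1)) := by
        rw [rpow_sub hx, rpow_sub hy, rpow_sub hs, div_rpow hx.le hs.le, div_rpow hy.le hs.le,
          rpow_add hs, rpow_one, rpow_one, rpow_one]
        field_simp
    _ ≤ _ := by gcongr
end

section
/- For every integer $d \ge 2$, $B(1/2, (d-1)/2) \ge \frac{2}{\sqrt{d}}$, where $B$ is the beta function. -/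
open Real

/-- Wendel's inequality at `s = 1/2`: `Γ(x + 1/2) ≤ √x · Γ(x)` for `x > 0`. -/
lemma gamma_wendel {x : ℝ} (hx : 0 < x) :
    Real.Gamma (x + 1 / 2) ≤ Real.sqrt x * Real.Gamma x := by
  have h1 : (0:ℝ) < x + 1 := by linarith
  have hc := Real.convexOn_log_Gamma.2 (Set.mem_Ioi.mpr hx) (Set.mem_Ioi.mpr h1)
    (by norm_num : (0:ℝ) ≤ 1/2) (by norm_num : (0:ℝ) ≤ 1/2) (by norm_num)
  simp only [Function.comp_apply, smul_eq_mul] at hc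
  rw [show 1/2 * x + 1/2 * (x + 1) = x + 1/2 by ring] at hc
  have hgx : 0 < Real.Gamma x := Real.Gamma_pos_of_pos hx
  have hgx1 : Real.Gamma (x + 1) = x * Real.Gamma x := Real.Gamma_add_one hx.ne'
  have hRHS : 1/2 * Real.log (Real.Gamma x) + 1/2 * Real.log (Real.Gamma (x+1))
      = Real.log (Real.sqrt x * Real.Gamma x) := by
    rw [hgx1, Real.log_mul hx.ne' hgx.ne',
      Real.log_mul (Real.sqrt_pos.mpr hx).ne' hgx.ne', Real.log_sqrt hx.le]
    ring
  rw [hRHS] at hc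
  have hpos : 0 < Real.Gamma (x + 1/2) := Real.Gamma_pos_of_pos (by linarith)
  have hpos2 : 0 < Real.sqrt x * Real.Gamma x :=
    mul_pos (Real.sqrt_pos.mpr hx) hgx
  exact (Real.log_le_log_iff hpos hpos2).mp hc

/-- For every integer `d ≥ 2`, `B(1/2, (d-1)/2) ≥ 2/√d`. -/
theorem betaFn_half_ge (d : ℕ) (hd : 2 ≤ d) :
    betaFn (1 / 2) ((d - 1) / 2) ≥ 2 / Real.sqrt d := by
  have hd2 : (2:ℝ) ≤ (d:ℝ) := by exact_mod_cast hd
  set s : ℝ := ((d:ℝ) - 1) / 2 with hs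
  have hspos : 0 < s := by rw [hs]; linarith
  have hgs : 0 < Real.Gamma s := Real.Gamma_pos_of_pos hspos
  have hsum : (1:ℝ)/2 + s = s + 1/2 := by ring
  have hgsum : 0 < Real.Gamma (s + 1/2) := Real.Gamma_pos_of_pos (by linarith)
  have hwendel := gamma_wendel hspos
  have hbeta : betaFn (1/2) s = Real.sqrt π * Real.Gamma s / Real.Gamma (s + 1/2) := by
    rw [betaFn, Real.Gamma_one_half_eq, hsum]
  -- lower bound: √π Γs / Γ(s+1/2) ≥ √π / √s
  have h1 : Real.sqrt π / Real.sqrt s ≤ betaFn (1/2) s := by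
    rw [hbeta, div_le_div_iff₀ (Real.sqrt_pos.mpr hspos) hgsum]
    calc Real.sqrt π * Real.Gamma (s + 1/2)
        ≤ Real.sqrt π * (Real.sqrt s * Real.Gamma s) := by
          exact mul_le_mul_of_nonneg_left hwendel (Real.sqrt_nonneg _)
      _ = Real.sqrt π * Real.Gamma s * Real.sqrt s := by ring
  -- now show 2/√d ≤ √π/√s
  have hdpos : (0:ℝ) < (d:ℝ) := by linarith
  have h2 : 2 / Real.sqrt d ≤ Real.sqrt π / Real.sqrt s := by
    rw [div_le_div_iff₀ (Real.sqrt_pos.mpr hdpos) (Real.sqrt_pos.mpr hspos)]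
    have : 2 * Real.sqrt s = Real.sqrt (4 * s) := by
      rw [show (4:ℝ) * s = 2^2 * s by ring, Real.sqrt_mul (by positivity),
        Real.sqrt_sq (by norm_num)]
    rw [this, ← Real.sqrt_mul Real.pi_pos.le]
    apply Real.sqrt_le_sqrt
    have hpi := Real.pi_gt_three
    have : 4 * s = 2 * ((d:ℝ) - 1) := by rw [hs]; ring
    rw [this]
    nlinarith
  linarith
end

section
/- For integer $d \ge 3$, the function $f(\alpha) = I_{\alpha^2}(1/2, (d-1)/2)$ is concave on $[0,1]$, and consequently $f(\alpha) \le f(0) + \alpha f'(0) = \frac{2\alpha}{B(1/2, (d-1)/2)}$ for all $\alpha \in [0,1]$. -/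
/-- The regularized incomplete beta function
`I_x(a,b) = (∫_0^x t^{a-1}(1-t)^{b-1} dt) / B(a,b)`. -/
noncomputable def regIncBeta (a b x : ℝ) : ℝ :=
  (∫ t in (0 : ℝ)..x, t ^ (a - 1) * (1 - t) ^ (b - 1)) /
    (∫ t in (0 : ℝ)..1, t ^ (a - 1) * (1 - t) ^ (b - 1))

open Set MeasureTheory intervalIntegral Filter Topology

section aux

variable {b : ℝ}

noncomputable def auxH (b : ℝ) : ℝ → ℝ := fun t => t ^ (1/2 - 1 : ℝ) * (1 - t) ^ (b - 1)
noncomputable def auxK (b : ℝ) : ℝ → ℝ := fun s => 2 * (1 - s^2) ^ (b - 1)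

lemma auxK_cont (hb : 1 ≤ b) : Continuous (auxK b) := by
  exact continuous_const.mul <| (continuous_const.sub (continuous_pow 2)).rpow_const
    fun x => Or.inr (by linarith)

lemma auxH_int (hb : 1 ≤ b) : IntervalIntegrable (auxH b) volume 0 1 := by
  have h1 : IntervalIntegrable (fun t : ℝ => t ^ (1/2 - 1 : ℝ)) volume 0 1 :=
    intervalIntegral.intervalIntegrable_rpow' (by norm_num)
  have h2 : ContinuousOn (fun t : ℝ => (1 - t) ^ (b - 1)) (Set.uIcc (0:ℝ) 1) :=
    (continuousOn_const.sub continuousOn_id).rpow_const fun x _ => Or.inr (by linarith)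
  exact h1.mul_continuousOn h2

lemma auxH_contOn (hb : 1 ≤ b) : ContinuousOn (auxH b) (Ioi (0:ℝ)) := by
  apply ContinuousOn.mul
  · exact (continuousOn_id).rpow_const fun x hx => Or.inl (ne_of_gt hx)
  · exact ((continuous_const.sub continuous_id).rpow_const
      fun x => Or.inr (by linarith)).continuousOn

end aux

section aux2
variable {b : ℝ}

lemma auxBeta (hb : 1 ≤ b) :
    (∫ t in (0:ℝ)..1, auxH b t) = betaFn (1/2) b := by
  have hb0 : (0:ℝ) < b := by linarith
  have h1 : Complex.betaIntegral (1/2) (b : ℂ) = ((∫ t in (0:ℝ)..1, auxH b t : ℝ) : ℂ) := by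
    rw [Complex.betaIntegral, ← intervalIntegral.integral_ofReal]
    refine intervalIntegral.integral_congr fun x hx => ?_
    rw [Set.uIcc_of_le (by norm_num : (0:ℝ) ≤ 1)] at hx
    have hx0 : (0:ℝ) ≤ x := hx.1
    have hx1 : (0:ℝ) ≤ 1 - x := by linarith [hx.2]
    show (x:ℂ) ^ ((1/2 : ℂ) - 1) * (1 - (x:ℂ)) ^ ((b:ℂ) - 1) = ((auxH b x : ℝ) : ℂ)
    rw [auxH]
    push_cast [Complex.ofReal_cpow hx0, Complex.ofReal_cpow hx1]
    ring_nf
  have h2 := Complex.Gamma_mul_Gamma_eq_betaIntegral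
      (s := (1/2 : ℂ)) (t := (b : ℂ)) (by norm_num) (by simpa using hb0)
  rw [h1] at h2
  have e12 : (1/2 : ℂ) = ((1/2 : ℝ) : ℂ) := by norm_num
  rw [e12, Complex.Gamma_ofReal, ← Complex.ofReal_add, Complex.Gamma_ofReal,
    Complex.Gamma_ofReal, ← Complex.ofReal_mul, ← Complex.ofReal_mul] at h2
  have h3 : Real.Gamma (1/2) * Real.Gamma b
      = Real.Gamma (1/2 + b) * ∫ t in (0:ℝ)..1, auxH b t := by exact_mod_cast h2
  have hpos : 0 < Real.Gamma (1/2 + b) := Real.Gamma_pos_of_pos (by linarith)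
  rw [betaFn, eq_div_iff hpos.ne']
  linarith [h3]

end aux2

section aux3
variable {b : ℝ}

lemma auxSub (hb : 1 ≤ b) {ε α : ℝ} (hε : 0 < ε) (hεα : ε ≤ α) :
    (∫ t in (ε^2)..(α^2), auxH b t) = ∫ s in ε..α, auxK b s := by
  have huIcc : Set.uIcc ε α = Set.Icc ε α := Set.uIcc_of_le hεα
  have hder : ∀ x ∈ Set.uIcc ε α, HasDerivAt (fun s : ℝ => s^2) (2*x) x := by
    intro x _
    simpa using hasDerivAt_pow 2 x
  have himg : (fun s : ℝ => s^2) '' (Set.uIcc ε α) ⊆ Set.Ioi 0 := by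
    rintro _ ⟨x, hx, rfl⟩
    rw [huIcc] at hx
    have : 0 < x := lt_of_lt_of_le hε hx.1
    exact pow_pos this 2
  have h := intervalIntegral.integral_comp_smul_deriv' (f := fun s : ℝ => s^2)
    (f' := fun s : ℝ => 2*s) (g := auxH b) (a := ε) (b := α) hder
    (by fun_prop) ((auxH_contOn hb).mono himg)
  beta_reduce at h
  rw [← h]
  refine intervalIntegral.integral_congr fun s hs => ?_
  rw [huIcc] at hs
  have hs0 : 0 < s := lt_of_lt_of_le hε hs.1
  have hsq : (s^2 : ℝ) ^ (1/2 - 1 : ℝ) = s⁻¹ := by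
    rw [← Real.rpow_natCast s 2, ← Real.rpow_mul hs0.le]
    norm_num
    simpa using Real.rpow_neg_one s
  show (2*s) • auxH b (s^2) = auxK b s
  rw [auxH, auxK]
  simp only [smul_eq_mul, hsq]
  field_simp

lemma auxKey (hb : 1 ≤ b) {α : ℝ} (hα : α ∈ Set.Icc (0:ℝ) 1) :
    (∫ t in (0:ℝ)..α^2, auxH b t) = ∫ s in (0:ℝ)..α, auxK b s := by
  rcases eq_or_lt_of_le hα.1 with h0 | h0
  · rw [← h0]; simp
  set F := fun x : ℝ => ∫ t in (0:ℝ)..x, auxH b t with hF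
  set G := fun x : ℝ => ∫ s in (0:ℝ)..x, auxK b s with hG
  have hFi : IntervalIntegrable (auxH b) volume 0 1 := auxH_int hb
  have hFc : ContinuousOn F (Set.uIcc (0:ℝ) 1) :=
    intervalIntegral.continuousOn_primitive_interval' hFi Set.left_mem_uIcc
  have hGcont : Continuous G := continuous_iff_continuousAt.mpr fun x =>
    (((auxK_cont hb).integral_hasStrictDerivAt 0 x).hasDerivAt).continuousAt
  set u : ℕ → ℝ := fun n => α / (n+1) with hu
  have hupos : ∀ n, 0 < u n := fun n => div_pos h0 (by positivity)
  have hule : ∀ n, u n ≤ α := fun n => div_le_self h0.le (by norm_num)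
  have hulim : Tendsto u atTop (𝓝 0) := by
    have := tendsto_one_div_add_atTop_nhds_zero_nat.const_mul α
    simpa [hu, div_eq_mul_inv, mul_comm] using this
  have hdiff : ∀ n, F (α^2) - F ((u n)^2) = G α - G (u n) := by
    intro n
    have hsq1 : α^2 ∈ Set.uIcc (0:ℝ) 1 := by
      rw [Set.uIcc_of_le (by norm_num)]
      exact ⟨sq_nonneg _, by nlinarith [hα.2]⟩
    have hsq2 : (u n)^2 ∈ Set.uIcc (0:ℝ) 1 := by
      rw [Set.uIcc_of_le (by norm_num)]
      have := hule n
      have := (hupos n).le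
      exact ⟨sq_nonneg _, by nlinarith [hα.2]⟩
    have hI1 : IntervalIntegrable (auxH b) volume 0 (α^2) :=
      hFi.mono_set (Set.uIcc_subset_uIcc Set.left_mem_uIcc hsq1)
    have hI2 : IntervalIntegrable (auxH b) volume 0 ((u n)^2) :=
      hFi.mono_set (Set.uIcc_subset_uIcc Set.left_mem_uIcc hsq2)
    have hK1 : IntervalIntegrable (auxK b) volume 0 α := (auxK_cont hb).intervalIntegrable _ _
    have hK2 : IntervalIntegrable (auxK b) volume 0 (u n) := (auxK_cont hb).intervalIntegrable _ _
    have e1 : F (α^2) - F ((u n)^2) = ∫ t in ((u n)^2)..(α^2), auxH b t :=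
      intervalIntegral.integral_interval_sub_left hI1 hI2
    have e2 : G α - G (u n) = ∫ s in (u n)..α, auxK b s :=
      intervalIntegral.integral_interval_sub_left hK1 hK2
    rw [e1, e2, auxSub hb (hupos n) (hule n)]
  have hsqmem : ∀ n, (u n)^2 ∈ Set.uIcc (0:ℝ) 1 := by
    intro n
    rw [Set.uIcc_of_le (by norm_num)]
    have := hule n
    have := (hupos n).le
    exact ⟨sq_nonneg _, by nlinarith [hα.2]⟩
  have hl1 : Tendsto (fun n => F (α^2) - F ((u n)^2)) atTop (𝓝 (F (α^2) - F 0)) := by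
    refine tendsto_const_nhds.sub ?_
    refine ((hFc 0 Set.left_mem_uIcc).tendsto).comp ?_
    refine tendsto_nhdsWithin_of_tendsto_nhds_of_eventually_within _ ?_ (Filter.Eventually.of_forall hsqmem)
    simpa using hulim.pow 2
  have hl2 : Tendsto (fun n => G α - G (u n)) atTop (𝓝 (G α - G 0)) :=
    tendsto_const_nhds.sub (hGcont.continuousAt.tendsto.comp hulim)
  have := tendsto_nhds_unique (hl1.congr hdiff) hl2
  have hF0 : F 0 = 0 := intervalIntegral.integral_same
  have hG0 : G 0 = 0 := intervalIntegral.integral_same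
  rw [hF0, hG0] at this
  linarith [this]

end aux3

/-- For integer `d ≥ 3`, `f(α) = I_{α²}(1/2, (d-1)/2)` is concave on `[0,1]`, and hence
`f(α) ≤ 2α / B(1/2, (d-1)/2)` on `[0,1]`. -/
theorem regIncBeta_concave (d : ℕ) (hd : 3 ≤ d) :
    ConcaveOn ℝ (Set.Icc (0 : ℝ) 1)
      (fun α => regIncBeta (1 / 2) ((d - 1) / 2) (α ^ 2)) ∧
    ∀ α ∈ Set.Icc (0 : ℝ) 1,
      regIncBeta (1 / 2) ((d - 1) / 2) (α ^ 2) ≤ 2 * α / betaFn (1 / 2) ((d - 1) / 2) := by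
  have hd3 : (3:ℝ) ≤ (d:ℝ) := by exact_mod_cast hd
  set b : ℝ := ((d:ℝ) - 1) / 2 with hbdef
  have hb : 1 ≤ b := by rw [hbdef]; linarith
  have hq : (0:ℝ) ≤ b - 1 := by linarith
  have hBint : (∫ t in (0:ℝ)..1, auxH b t) = betaFn (1/2) b := auxBeta hb
  have hBpos : 0 < ∫ t in (0:ℝ)..1, auxH b t := by
    refine intervalIntegral_pos_of_pos_on (auxH_int hb) (fun x hx => ?_) one_pos
    exact mul_pos (Real.rpow_pos_of_pos hx.1 _) (Real.rpow_pos_of_pos (by linarith [hx.2]) _)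
  have hbetapos : 0 < betaFn (1/2) b := hBint ▸ hBpos
  set G := fun x : ℝ => ∫ s in (0:ℝ)..x, auxK b s with hGdef
  have hreg : ∀ z ∈ Set.Icc (0:ℝ) 1,
      regIncBeta (1/2) b (z^2) = G z / betaFn (1/2) b := by
    intro z hz
    have h1 : regIncBeta (1/2) b (z^2)
        = (∫ t in (0:ℝ)..(z^2), auxH b t) / (∫ t in (0:ℝ)..1, auxH b t) := rfl
    rw [h1, auxKey hb hz, hBint]
  have hGcont : Continuous G := continuous_iff_continuousAt.mpr fun x =>
    (((auxK_cont hb).integral_hasStrictDerivAt 0 x).hasDerivAt).continuousAt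
  have hGconc : ConcaveOn ℝ (Set.Icc (0:ℝ) 1) G := by
    refine AntitoneOn.concaveOn_of_deriv (convex_Icc 0 1) hGcont.continuousOn
      (fun x _ => (((auxK_cont hb).integral_hasStrictDerivAt 0 x).hasDerivAt).differentiableAt.differentiableWithinAt)
      ?_
    intro x hx y hy hxy
    rw [interior_Icc] at hx hy
    have hderiv : ∀ z : ℝ, deriv G z = auxK b z := fun z =>
      Continuous.deriv_integral (auxK b) (auxK_cont hb) 0 z
    rw [hderiv x, hderiv y]
    have h1 : (0:ℝ) ≤ 1 - y^2 := by nlinarith [hy.1, hy.2]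
    have h2 : (1 - y^2 : ℝ) ≤ 1 - x^2 := by nlinarith [hx.1]
    exact mul_le_mul_of_nonneg_left (Real.rpow_le_rpow h1 h2 hq) (by norm_num)
  have hconc : ConcaveOn ℝ (Set.Icc (0:ℝ) 1) (fun z => G z / betaFn (1/2) b) := by
    have h := hGconc.smul (c := (betaFn (1/2) b)⁻¹) (inv_nonneg.mpr hbetapos.le)
    simpa [smul_eq_mul, div_eq_inv_mul] using h
  constructor
  · refine ⟨convex_Icc 0 1, fun x hx y hy a c ha hc hac => ?_⟩
    have hmem : a • x + c • y ∈ Set.Icc (0:ℝ) 1 := (convex_Icc 0 1) hx hy ha hc hac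
    simp only
    rw [hreg _ hmem, hreg _ hx, hreg _ hy]
    exact hconc.2 hx hy ha hc hac
  · intro α hα
    rw [hreg _ hα]
    have hGle : G α ≤ 2 * α := by
      have h1 : (∫ s in (0:ℝ)..α, auxK b s) ≤ ∫ _ in (0:ℝ)..α, (2:ℝ) := by
        refine intervalIntegral.integral_mono_on hα.1
          ((auxK_cont hb).intervalIntegrable _ _) intervalIntegrable_const fun x hx => ?_
        have hx2 : (1 - x^2 : ℝ) ^ (b-1) ≤ 1 :=
          Real.rpow_le_one (by nlinarith [hx.1, hx.2, hα.2]) (by nlinarith [hx.1]) hq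
        calc auxK b x = 2 * (1 - x^2)^(b-1) := rfl
          _ ≤ 2 * 1 := by linarith
          _ = 2 := by norm_num
      simpa [mul_comm] using h1
    gcongr
end
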